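/- Let M be a topological space, let E, F, G be finite-dimensional inner product spaces over 𝕜 ∈ {ℝ, ℂ}, and let e : M → (G →L[𝕜] E) and d : M → (E →L[𝕜] F) be continuous families of linear maps. Suppose (x_n)_{n∈ℕ} is a sequence in M converging to x ∈ M, (V_n)_{n∈ℕ} is a sequence of subspaces of E with range(e(x_n)) ≤ V_n ≤ ker(d(x_n)) for every n, and V is a subspace of E with ‖P_{V_n} − P_V‖ → 0. Then range(e(x)) ≤ V ≤ ker(d(x)). -/

import Mathlib

open FiniteDimensional Filter

/-- The orthogonal projection onto a subspace `V` of a finite-dimensional inner product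
space, regarded as a continuous linear endomorphism. -/
noncomputable def orthProjection {𝕜 E : Type*} [RCLike 𝕜] [NormedAddCommGroup E]
    [InnerProductSpace 𝕜 E] [FiniteDimensional 𝕜 E] (V : Submodule 𝕜 E) : E →L[𝕜] E :=
  V.subtypeL.comp (Submodule.orthogonalProjectionOnto V)

/-!
Both inclusions are equations in the projection: `range A ≤ V` iff `P_V ∘ A = A`, and
`V ≤ ker B` iff `B ∘ P_V = 0`. Composition is continuous for the operator norm, so these
equations define closed sets of pairs `(P, A)` and `(B, P)`, and hence survive the limit
`(P_{V_n}, e (x_n)) → (P_V, e x)`, resp. `(d (x_n), P_{V_n}) → (d x, P_V)`.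
-/

open Topology

section

variable {𝕜 E G : Type*} [RCLike 𝕜] [NormedAddCommGroup E] [InnerProductSpace 𝕜 E]
  [FiniteDimensional 𝕜 E] [NormedAddCommGroup G] [NormedSpace 𝕜 G] {V : Submodule 𝕜 E}

theorem orthProjection_eq_starProjection (V : Submodule 𝕜 E) :
    orthProjection V = V.starProjection :=
  rfl

theorem orthProjection_comp_eq_self_iff {A : G →L[𝕜] E} :
    orthProjection V ∘L A = A ↔ LinearMap.range (A : G →ₗ[𝕜] E) ≤ V := by
  simp [ContinuousLinearMap.ext_iff, LinearMap.range_le_iff_comap, Submodule.eq_top_iff',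
    orthProjection_eq_starProjection, Submodule.starProjection_eq_self_iff]

theorem comp_orthProjection_eq_zero_iff {B : E →L[𝕜] G} :
    B ∘L orthProjection V = 0 ↔ V ≤ LinearMap.ker (B : E →ₗ[𝕜] G) := by
  refine ⟨fun h v hv => ?_,
    fun h => ContinuousLinearMap.ext fun v => h (V.starProjection_apply_mem v)⟩
  rw [LinearMap.mem_ker, ContinuousLinearMap.coe_coe, ← Submodule.starProjection_eq_self_iff.2 hv]
  exact ContinuousLinearMap.ext_iff.1 h v

variable {ι : Type*} {l : Filter ι} [l.NeBot] {Vs : ι → Submodule 𝕜 E}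

theorem range_le_of_tendsto_orthProjection
    (hP : Tendsto (fun i => orthProjection (Vs i)) l (𝓝 (orthProjection V)))
    {A : ι → G →L[𝕜] E} {A₀ : G →L[𝕜] E} (hA : Tendsto A l (𝓝 A₀))
    (h : ∀ᶠ i in l, LinearMap.range (A i : G →ₗ[𝕜] E) ≤ Vs i) :
    LinearMap.range (A₀ : G →ₗ[𝕜] E) ≤ V := by
  have hclosed : IsClosed {p : (E →L[𝕜] E) × (G →L[𝕜] E) | p.1 ∘L p.2 = p.2} :=
    isClosed_eq (continuous_fst.clm_comp continuous_snd) continuous_snd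
  exact orthProjection_comp_eq_self_iff.1 <| hclosed.mem_of_tendsto (hP.prodMk_nhds hA) <|
    h.mono fun _ => orthProjection_comp_eq_self_iff.2

theorem le_ker_of_tendsto_orthProjection
    (hP : Tendsto (fun i => orthProjection (Vs i)) l (𝓝 (orthProjection V)))
    {B : ι → E →L[𝕜] G} {B₀ : E →L[𝕜] G} (hB : Tendsto B l (𝓝 B₀))
    (h : ∀ᶠ i in l, Vs i ≤ LinearMap.ker (B i : E →ₗ[𝕜] G)) :
    V ≤ LinearMap.ker (B₀ : E →ₗ[𝕜] G) := by
  have hclosed : IsClosed {p : (E →L[𝕜] G) × (E →L[𝕜] E) | p.1 ∘L p.2 = 0} :=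
    isClosed_eq (continuous_fst.clm_comp continuous_snd) continuous_const
  exact comp_orthProjection_eq_zero_iff.1 <| hclosed.mem_of_tendsto (hB.prodMk_nhds hP) <|
    h.mono fun _ => comp_orthProjection_eq_zero_iff.2

end

theorem range_le_gap_limit_le_ker_general {𝕜 E F G M : Type*} [RCLike 𝕜]
    [NormedAddCommGroup E] [InnerProductSpace 𝕜 E] [FiniteDimensional 𝕜 E]
    [NormedAddCommGroup F] [InnerProductSpace 𝕜 F]
    [NormedAddCommGroup G] [InnerProductSpace 𝕜 G]
    [TopologicalSpace M]
    (e : M → (G →L[𝕜] E)) (he : Continuous e)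
    (d : M → (E →L[𝕜] F)) (hd : Continuous d)
    (x : M) (xs : ℕ → M) (hxs : Tendsto xs atTop (nhds x))
    (Vs : ℕ → Submodule 𝕜 E)
    (hVs : ∀ n, LinearMap.range (e (xs n) : G →ₗ[𝕜] E) ≤ Vs n ∧
      Vs n ≤ LinearMap.ker (d (xs n) : E →ₗ[𝕜] F))
    (V : Submodule 𝕜 E)
    (hconv : Tendsto (fun n => ‖orthProjection (Vs n) - orthProjection V‖) atTop (nhds 0)) :
    LinearMap.range (e x : G →ₗ[𝕜] E) ≤ V ∧ V ≤ LinearMap.ker (d x : E →ₗ[𝕜] F) := by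
  have hP : Tendsto (fun n => orthProjection (Vs n)) atTop (𝓝 (orthProjection V)) :=
    tendsto_iff_norm_sub_tendsto_zero.2 hconv
  exact ⟨range_le_of_tendsto_orthProjection hP ((he.tendsto x).comp hxs)
      (Eventually.of_forall fun n => (hVs n).1),
    le_ker_of_tendsto_orthProjection hP ((hd.tendsto x).comp hxs)
      (Eventually.of_forall fun n => (hVs n).2)⟩

/-- If `range (e (x n)) ≤ V n ≤ ker (d (x n))` along a sequence `x n → x` and the
subspaces `V n` converge to `V` in the gap metric, then `range (e x) ≤ V ≤ ker (d x)`. -/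
theorem range_le_gap_limit_le_ker {𝕜 E F G M : Type*} [RCLike 𝕜]
    [NormedAddCommGroup E] [InnerProductSpace 𝕜 E] [FiniteDimensional 𝕜 E]
    [NormedAddCommGroup F] [InnerProductSpace 𝕜 F] [FiniteDimensional 𝕜 F]
    [NormedAddCommGroup G] [InnerProductSpace 𝕜 G] [FiniteDimensional 𝕜 G]
    [TopologicalSpace M]
    (e : M → (G →L[𝕜] E)) (he : Continuous e)
    (d : M → (E →L[𝕜] F)) (hd : Continuous d)
    (x : M) (xs : ℕ → M) (hxs : Tendsto xs atTop (nhds x))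
    (Vs : ℕ → Submodule 𝕜 E)
    (hVs : ∀ n, LinearMap.range (e (xs n) : G →ₗ[𝕜] E) ≤ Vs n ∧
      Vs n ≤ LinearMap.ker (d (xs n) : E →ₗ[𝕜] F))
    (V : Submodule 𝕜 E)
    (hconv : Tendsto (fun n => ‖orthProjection (Vs n) - orthProjection V‖) atTop (nhds 0)) :
    LinearMap.range (e x : G →ₗ[𝕜] E) ≤ V ∧ V ≤ LinearMap.ker (d x : E →ₗ[𝕜] F) :=
  range_le_gap_limit_le_ker_general e he d hd x xs hxs Vs hVs V hconv
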